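/- Let G and H be finite simple graphs with the same signless Laplacian permanental polynomial, i.e., per(xI − Q(G)) = per(xI − Q(H)) as polynomials in x. Then: (i) G and H have the same number of vertices; (ii) G and H have the same number of edges; (iii) the sum of the squares of the vertex degrees of G equals that of H; and (iv) Σ_i d_i(G)³ + 6c₃(G) = Σ_i d_i(H)³ + 6c₃(H), where d_i denotes the degree of the i-th vertex and c₃ denotes the number of triangles in the graph. -/

import Mathlib

open scoped Classical
open Polynomial

noncomputable section

/-- The signless Laplacian matrix `Q(G) = D(G) + A(G)` of a graph `G`. -/
def signlessLapMatrix {V : Type*} [Fintype V] (G : SimpleGraph V) : Matrix V V ℚ :=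
  G.degMatrix ℚ + G.adjMatrix ℚ

/-- The signless Laplacian permanental polynomial `per(x·I − Q(G))` of a graph `G`. -/
def qPermPoly {V : Type*} [Fintype V] (G : SimpleGraph V) : Polynomial ℚ :=
  Matrix.permanent
    (Matrix.diagonal (fun _ : V => (X : Polynomial ℚ)) - (signlessLapMatrix G).map Polynomial.C)

/-- The number of triangles (3-cycles) of `G`, i.e. the number of 3-cliques. -/
def triangleCount {V : Type*} [Fintype V] (G : SimpleGraph V) : ℕ :=
  (G.cliqueFinset 3).card

/-!
Expanding the permanent, the coefficient of `x ^ (n - k)` in `per(x I - M)` is a sum over the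
permutations `σ` moving at most `k` points: `σ` contributes the product of the entries
`-M (σ i) i` over its moved points times the `(k - #σ.support)`-th elementary symmetric function
of the `-M i i` at its fixed points.

For `M = Q(G)` and `k ≤ 3`, that product is `(-1) ^ #S` if the set `S` of moved points is a
clique of `G` and `0` otherwise, and `S` is the support of exactly `numDerangements #S`
permutations. So for `k = 1, 2, 3` the coefficients are polynomials in the degree power sums (by
Newton's identities), the number of edges and the number of triangles, from which the invariants
are read off one after another; the number of vertices is the degree of the polynomial.
-/

open Finset Equiv

namespace Matrix

variable {n R : Type*} [Fintype n] [DecidableEq n] [CommRing R]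

def permCharpoly (M : Matrix n n R) : R[X] := M.charmatrix.permanent

lemma prod_charmatrix_apply_perm (M : Matrix n n R) (σ : Perm n) :
    ∏ i, M.charmatrix (σ i) i
      = C (∏ i ∈ σ.support, -M (σ i) i) * ∏ i ∈ σ.supportᶜ, (X + C (-M i i)) := by
  rw [map_prod, ← prod_mul_prod_compl σ.support]
  congr 1
  · refine prod_congr rfl fun i hi => ?_
    rw [charmatrix_apply_ne _ _ _ (Perm.mem_support.mp hi), map_neg]
  · refine prod_congr rfl fun i hi => ?_
    rw [Perm.notMem_support.mp (mem_compl.mp hi), charmatrix_apply_eq, C_neg, ← sub_eq_add_neg]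

/- The `k`-th coefficient of `p.reflect (card n)` is the coefficient of `X ^ (card n - k)` when
`k ≤ card n`, and `0` otherwise; this avoids truncated subtraction and makes the formulas below
hold for every `k`. -/
lemma coeff_reflect_prod_charmatrix_apply_perm (M : Matrix n n R) (σ : Perm n) (k : ℕ) :
    ((∏ i, M.charmatrix (σ i) i).reflect (Fintype.card n)).coeff k =
      if #σ.support ≤ k then
        (∏ i ∈ σ.support, -M (σ i) i) *
          ∑ t ∈ σ.supportᶜ.powersetCard (k - #σ.support), ∏ i ∈ t, -M i i
      else 0 := by
  nontriviality R
  have hcompl : #σ.supportᶜ = Fintype.card n - #σ.support := card_compl _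
  have hsupp : #σ.support ≤ Fintype.card n := card_le_univ _
  have hdeg : (∏ i ∈ σ.supportᶜ, (X + C (-M i i))).natDegree = Fintype.card n - #σ.support := by
    simp only [natDegree_prod_of_monic _ _ fun i _ => monic_X_add_C _, natDegree_X_add_C,
      sum_const, smul_eq_mul, mul_one, hcompl]
  rw [coeff_reflect, prod_charmatrix_apply_perm, coeff_C_mul]
  by_cases hk : k ≤ Fintype.card n
  · rw [revAt_le hk]
    split_ifs with hs
    · rw [prod_X_add_C_coeff _ _ (by omega)]
      congr 3
      omega
    · rw [coeff_eq_zero_of_natDegree_lt (by omega), mul_zero]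
  · rw [revAt_eq_self_of_lt (by omega), coeff_eq_zero_of_natDegree_lt (by omega), mul_zero]
    split_ifs
    · rw [powersetCard_eq_empty.mpr (by omega), Finset.sum_empty, mul_zero]
    · rfl

lemma coeff_reflect_permCharpoly (M : Matrix n n R) (k : ℕ) :
    (M.permCharpoly.reflect (Fintype.card n)).coeff k =
      ∑ σ : Perm n with #σ.support ≤ k, (∏ i ∈ σ.support, -M (σ i) i) *
          ∑ t ∈ σ.supportᶜ.powersetCard (k - #σ.support), ∏ i ∈ t, -M i i := by
  rw [permCharpoly, permanent, coeff_reflect, finsetSum_coeff, sum_filter]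
  refine sum_congr rfl fun σ _ => ?_
  rw [← coeff_reflect, coeff_reflect_prod_charmatrix_apply_perm]

lemma natDegree_permCharpoly [Nontrivial R] (M : Matrix n n R) :
    M.permCharpoly.natDegree = Fintype.card n := by
  have hlead : M.permCharpoly.coeff (Fintype.card n) = 1 := by
    rw [← revAt_zero (Fintype.card n), ← coeff_reflect, coeff_reflect_permCharpoly]
    simp [filter_eq']
  refine natDegree_eq_of_le_of_coeff_ne_zero ?_ (by simp [hlead])
  refine natDegree_sum_le_of_forall_le _ _ fun σ _ => (natDegree_prod_le _ _).trans ?_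
  calc ∑ i, (M.charmatrix (σ i) i).natDegree ≤ ∑ _i : n, 1 :=
        sum_le_sum fun i _ => (charmatrix_apply_natDegree_le _ _).trans (by split_ifs <;> simp)
    _ = Fintype.card n := by simp

end Matrix

section Newton

variable {ι R : Type*} [Fintype ι] [CommRing R]

lemma MvPolynomial.eval_esymm (f : ι → R) (k : ℕ) :
    eval f (esymm ι R k) = ∑ t ∈ univ.powersetCard k, ∏ i ∈ t, f i := by
  simp [esymm, map_sum, map_prod]

lemma two_mul_sum_powersetCard_two_prod (f : ι → R) :
    2 * ∑ t ∈ univ.powersetCard 2, ∏ i ∈ t, f i = (∑ i, f i) ^ 2 - ∑ i, f i ^ 2 := by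
  have h := MvPolynomial.mul_esymm_eq_sum ι R 2
  rw [sum_filter, Nat.sum_antidiagonal_eq_sum_range_succ_mk] at h
  replace h := congrArg (MvPolynomial.eval f) h
  simp only [Nat.cast_ofNat, map_mul, MvPolynomial.eval_ofNat, MvPolynomial.eval_esymm,
    Nat.reduceAdd, Nat.succ_eq_add_one, Order.lt_two_iff, MvPolynomial.psum, sum_range_succ,
    range_one, sum_singleton, zero_le, ↓reduceIte, pow_zero, MvPolynomial.esymm_zero, mul_one,
    tsub_zero, one_mul, Std.le_refl, pow_one, MvPolynomial.esymm_one, neg_mul,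
    Nat.add_one_sub_one, Nat.not_ofNat_le_one, add_zero, map_pow, map_neg, map_one, map_add,
    map_sum, MvPolynomial.eval_X] at h
  linear_combination h

lemma six_mul_sum_powersetCard_three_prod (f : ι → R) :
    6 * ∑ t ∈ univ.powersetCard 3, ∏ i ∈ t, f i
      = (∑ i, f i) ^ 3 - 3 * (∑ i, f i) * ∑ i, f i ^ 2 + 2 * ∑ i, f i ^ 3 := by
  have h := MvPolynomial.mul_esymm_eq_sum ι R 3
  rw [sum_filter, Nat.sum_antidiagonal_eq_sum_range_succ_mk] at h
  replace h := congrArg (MvPolynomial.eval f) h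
  simp only [Nat.cast_ofNat, map_mul, MvPolynomial.eval_ofNat, MvPolynomial.eval_esymm,
    Nat.reduceAdd, Nat.succ_eq_add_one, MvPolynomial.psum, sum_range_succ, range_one,
    sum_singleton, Nat.ofNat_pos, ↓reduceIte, pow_zero, MvPolynomial.esymm_zero, mul_one,
    tsub_zero, one_mul, Nat.one_lt_ofNat, pow_one, MvPolynomial.esymm_one, neg_mul,
    Nat.add_one_sub_one, Nat.lt_add_one, even_two, Even.neg_pow, one_pow, Nat.reduceSub,
    lt_self_iff_false, add_zero, map_pow, map_neg, map_one, map_add, map_sum,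
    MvPolynomial.eval_X] at h
  linear_combination 2 * h + (∑ i, f i) * two_mul_sum_powersetCard_two_prod f

end Newton

namespace Equiv.Perm

variable {α : Type*} [Fintype α] [DecidableEq α]

lemma card_filter_support_eq_numDerangements (S : Finset α) :
    #{σ : Perm α | σ.support = S} = numDerangements #S := by
  rw [← Fintype.card_coe S, ← card_derangements_eq_numDerangements,
    Fintype.card_congr (derangements.subtypeEquiv (· ∈ S)), Fintype.card_subtype]
  congr 1
  ext σ
  simp [Finset.ext_iff, Function.mem_fixedPoints, Function.IsFixedPt, not_iff_comm]

/- Otherwise `x`, `y`, `σ x` and `σ y` would be four distinct points moved by `σ`. -/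
lemma apply_eq_or_apply_eq_of_card_support_le_three {σ : Perm α} (hσ : #σ.support ≤ 3)
    {x y : α} (hx : x ∈ σ.support) (hy : y ∈ σ.support) (hxy : x ≠ y) :
    σ x = y ∨ σ y = x := by
  by_contra! h
  have hx' := mem_support.mp hx
  have hy' := mem_support.mp hy
  have hsub : {x, y, σ x, σ y} ⊆ σ.support := by
    simp [insert_subset_iff, hx, hy, hx', hy']
  have hcard := card_le_card hsub
  rw [card_insert_of_notMem (by simp [hxy, hx'.symm, h.2.symm]),
    card_insert_of_notMem (by simp [h.1.symm, hy'.symm]), card_pair (σ.injective.ne hxy)] at hcard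
  omega

end Equiv.Perm

namespace SimpleGraph

variable {V : Type*} [Fintype V] (G : SimpleGraph V)

lemma qPermPoly_eq_permCharpoly : qPermPoly G = (signlessLapMatrix G).permCharpoly := rfl

lemma signlessLapMatrix_apply_self (v : V) : signlessLapMatrix G v v = G.degree v := by
  simp [signlessLapMatrix, degMatrix]

lemma signlessLapMatrix_apply_of_ne {u v : V} (h : u ≠ v) :
    signlessLapMatrix G u v = G.adjMatrix ℚ u v := by
  simp [signlessLapMatrix, degMatrix, Matrix.diagonal_apply_ne _ h]

lemma prod_adjMatrix_apply_perm_eq_ite {σ : Perm V} (hσ : #σ.support ≤ 3) :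
    ∏ i ∈ σ.support, G.adjMatrix ℚ (σ i) i = if G.IsClique (σ.support : Set V) then 1 else 0 := by
  split_ifs with h
  · exact prod_eq_one fun i hi => by
      rw [adjMatrix_apply, if_pos (h (Perm.apply_mem_support.mpr hi) hi (Perm.mem_support.mp hi))]
  · obtain ⟨x, hx, y, hy, hxy, hadj⟩ : ∃ x ∈ σ.support, ∃ y ∈ σ.support, x ≠ y ∧ ¬G.Adj x y := by
      simpa [IsClique, Set.Pairwise] using h
    rcases σ.apply_eq_or_apply_eq_of_card_support_le_three hσ hx hy hxy with h' | h'
    · exact prod_eq_zero hx (by simp [h', G.adj_comm, hadj])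
    · exact prod_eq_zero hy (by simp [h', hadj])

lemma sum_filter_support_eq_prod_neg_signlessLapMatrix {S : Finset V} (hS : #S ≤ 3) :
    ∑ σ : Perm V with σ.support = S, ∏ i ∈ S, -signlessLapMatrix G (σ i) i
      = if G.IsClique (S : Set V) then (-1 : ℚ) ^ #S * numDerangements #S else 0 := by
  have hterm : ∀ σ ∈ ({σ : Perm V | σ.support = S} : Finset _),
      ∏ i ∈ S, -signlessLapMatrix G (σ i) i
        = (-1) ^ #S * if G.IsClique (S : Set V) then 1 else 0 := by
    intro σ hσ
    obtain rfl := (mem_filter.mp hσ).2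
    rw [prod_neg, ← prod_adjMatrix_apply_perm_eq_ite G hS]
    congr 1
    exact prod_congr rfl fun i hi => signlessLapMatrix_apply_of_ne G (Perm.mem_support.mp hi)
  rw [sum_congr rfl hterm, sum_const, Perm.card_filter_support_eq_numDerangements, nsmul_eq_mul]
  split_ifs <;> ring

lemma coeff_reflect_qPermPoly {k : ℕ} (hk : k ≤ 3) :
    ((qPermPoly G).reflect (Fintype.card V)).coeff k =
      ∑ j ∈ range (k + 1), ∑ S ∈ G.cliqueFinset j, (-1 : ℚ) ^ j * numDerangements j *
        ∑ t ∈ Sᶜ.powersetCard (k - j), ∏ i ∈ t, -(G.degree i : ℚ) := by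
  set e : Finset V → ℚ := fun S => ∑ t ∈ Sᶜ.powersetCard (k - #S), ∏ i ∈ t, -(G.degree i : ℚ)
  calc _ = ∑ S : Finset V, ∑ σ : Perm V with #σ.support ≤ k ∧ σ.support = S,
        (∏ i ∈ S, -signlessLapMatrix G (σ i) i) * e S := by
        rw [qPermPoly_eq_permCharpoly, Matrix.coeff_reflect_permCharpoly,
          ← sum_fiberwise _ Perm.support]
        simp only [filter_filter]
        refine sum_congr rfl fun S _ => sum_congr rfl fun σ hσ => ?_
        obtain rfl := (mem_filter.mp hσ).2.2
        simp [e, signlessLapMatrix_apply_self]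
    _ = ∑ S : Finset V, if #S ≤ k ∧ G.IsClique (S : Set V)
          then (-1 : ℚ) ^ #S * numDerangements #S * e S else 0 := by
        refine sum_congr rfl fun S _ => ?_
        by_cases hS : #S ≤ k
        · rw [filter_congr fun σ _ => and_iff_right_of_imp fun h => h ▸ hS, ← sum_mul,
            sum_filter_support_eq_prod_neg_signlessLapMatrix G (hS.trans hk)]
          split_ifs <;> simp_all
        · rw [if_neg (by tauto)]
          exact sum_eq_zero fun σ hσ => absurd ((mem_filter.mp hσ).2.2 ▸ (mem_filter.mp hσ).2.1) hS
    _ = _ := by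
        simp only [cliqueFinset, sum_filter, isNClique_iff]
        rw [sum_comm]
        refine sum_congr rfl fun S _ => ?_
        by_cases hc : G.IsClique (S : Set V) <;> simp [hc, e, Finset.sum_ite_eq]

lemma cliqueFinset_zero : G.cliqueFinset 0 = {∅} := by
  ext S
  simp

lemma card_filter_mem_cliqueFinset_two (v : V) :
    #{S ∈ G.cliqueFinset 2 | v ∈ S} = G.degree v := by
  rw [← card_neighborFinset_eq_degree]
  symm
  refine card_nbij (fun w => {v, w}) (fun w hw => ?_) (fun w hw w' hw' h => ?_) fun S hS => ?_
  · have hvw : v ≠ w := ((G.mem_neighborFinset v w).mp hw).ne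
    simp [isNClique_iff, card_pair hvw, (G.mem_neighborFinset v w).mp hw]
  · have hwv : w ≠ v := ((G.mem_neighborFinset v w).mp hw).ne.symm
    have : w ∈ ({v, w'} : Finset V) := (congrArg (w ∈ ·) h).mp (by simp)
    simpa [hwv] using this
  · obtain ⟨hS, hvS⟩ := mem_filter.mp (mem_coe.mp hS)
    obtain ⟨a, b, hab, rfl⟩ := card_eq_two.mp (mem_cliqueFinset_iff.mp hS).card_eq
    have hadj : G.Adj a b := (mem_cliqueFinset_iff.mp hS).isClique (by simp) (by simp) hab
    rcases mem_insert.mp hvS with rfl | hvS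
    · exact ⟨b, by simpa using hadj, rfl⟩
    obtain rfl := mem_singleton.mp hvS
    exact ⟨a, by simpa using hadj.symm, pair_comm _ _⟩

lemma sum_cliqueFinset_two_sum {M : Type*} [AddCommMonoid M] (f : V → M) :
    ∑ S ∈ G.cliqueFinset 2, ∑ v ∈ S, f v = ∑ v, G.degree v • f v := by
  rw [sum_comm' (t' := univ) (s' := fun v => {S ∈ G.cliqueFinset 2 | v ∈ S}) (by simp)]
  simp [card_filter_mem_cliqueFinset_two]

lemma two_mul_card_cliqueFinset_two : 2 * #(G.cliqueFinset 2) = ∑ v, G.degree v := by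
  calc 2 * #(G.cliqueFinset 2) = ∑ S ∈ G.cliqueFinset 2, #S := by
        rw [sum_const_nat fun S hS => (mem_cliqueFinset_iff.mp hS).card_eq, mul_comm]
    _ = ∑ v, G.degree v := by simpa using G.sum_cliqueFinset_two_sum fun _ => (1 : ℕ)

lemma coeff_reflect_qPermPoly_one :
    ((qPermPoly G).reflect (Fintype.card V)).coeff 1 = -∑ v, (G.degree v : ℚ) := by
  rw [coeff_reflect_qPermPoly G (by norm_num)]
  simp [sum_range_succ, cliqueFinset_zero, powersetCard_one]

lemma two_mul_coeff_reflect_qPermPoly_two :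
    2 * ((qPermPoly G).reflect (Fintype.card V)).coeff 2
      = (∑ v, (G.degree v : ℚ)) ^ 2 - ∑ v, (G.degree v : ℚ) ^ 2 + ∑ v, (G.degree v : ℚ) := by
  have hcoeff : ((qPermPoly G).reflect (Fintype.card V)).coeff 2
      = ∑ t ∈ univ.powersetCard 2, ∏ i ∈ t, -(G.degree i : ℚ) + #(G.cliqueFinset 2) := by
    rw [coeff_reflect_qPermPoly G (by norm_num)]
    simp [sum_range_succ, cliqueFinset_zero, numDerangements_add_two]
  have he2 := two_mul_sum_powersetCard_two_prod fun v => -(G.degree v : ℚ)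
  simp only [sum_neg_distrib, neg_sq] at he2
  have hC2 : 2 * (#(G.cliqueFinset 2) : ℚ) = ∑ v, (G.degree v : ℚ) := by
    exact_mod_cast G.two_mul_card_cliqueFinset_two
  rw [hcoeff]
  linear_combination he2 + hC2

lemma six_mul_coeff_reflect_qPermPoly_three :
    6 * ((qPermPoly G).reflect (Fintype.card V)).coeff 3
      = -(∑ v, (G.degree v : ℚ)) ^ 3 + 3 * (∑ v, (G.degree v : ℚ)) * ∑ v, (G.degree v : ℚ) ^ 2
        - 2 * ∑ v, (G.degree v : ℚ) ^ 3 - 3 * (∑ v, (G.degree v : ℚ)) ^ 2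
        + 6 * ∑ v, (G.degree v : ℚ) ^ 2 - 12 * triangleCount G := by
  have hcompl (S : Finset V) :
      ∑ v ∈ Sᶜ, (G.degree v : ℚ) = ∑ v, (G.degree v : ℚ) - ∑ v ∈ S, (G.degree v : ℚ) :=
    eq_sub_of_add_eq (sum_compl_add_sum S _)
  have hcoeff : ((qPermPoly G).reflect (Fintype.card V)).coeff 3
      = ∑ t ∈ univ.powersetCard 3, ∏ i ∈ t, -(G.degree i : ℚ)
        - (#(G.cliqueFinset 2) * ∑ v, (G.degree v : ℚ) - ∑ v, (G.degree v : ℚ) ^ 2)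
        - 2 * triangleCount G := by
    rw [coeff_reflect_qPermPoly G (by norm_num)]
    simp only [Nat.reduceAdd, sum_range_succ, range_one, sum_singleton, cliqueFinset_zero,
      pow_zero, numDerangements_zero, Nat.cast_one, ← sq, one_pow, tsub_zero, one_mul,
      compl_empty, pow_one, numDerangements_one, CharP.cast_eq_zero, mul_zero,
      Nat.add_one_sub_one, zero_mul, sum_const_zero, add_zero, even_two, Even.neg_pow,
      numDerangements_add_two, zero_add, Nat.reduceSub, powersetCard_one, sum_map,
      Function.Embedding.coeFn_mk, prod_singleton, sum_neg_distrib, hcompl, neg_sub,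
      sum_sub_distrib, sum_cliqueFinset_two_sum, nsmul_eq_mul, sum_const, mul_one, Nat.cast_ofNat,
      tsub_self, powersetCard_zero, prod_empty, triangleCount]
    ring
  have he3 := six_mul_sum_powersetCard_three_prod fun v => -(G.degree v : ℚ)
  simp only [sum_neg_distrib, neg_sq, Odd.neg_pow (by decide : Odd 3)] at he3
  have hC2 : 2 * (#(G.cliqueFinset 2) : ℚ) = ∑ v, (G.degree v : ℚ) := by
    exact_mod_cast G.two_mul_card_cliqueFinset_two
  rw [hcoeff]
  linear_combination he3 - 3 * (∑ v, (G.degree v : ℚ)) * hC2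

end SimpleGraph

/-- **Lemma 2.4.** If two graphs have the same signless Laplacian permanental polynomial,
then they have the same number of vertices, the same number of edges, the same sum of
squares of vertex degrees, and the same value of `∑ dᵢ³ + 6·c₃`, where `c₃` is the
number of triangles. -/
theorem qPermPoly_invariants
    {V W : Type*} [Fintype V] [Fintype W] (G : SimpleGraph V) (H : SimpleGraph W)
    (h : qPermPoly G = qPermPoly H) :
    Fintype.card V = Fintype.card W ∧
    G.edgeFinset.card = H.edgeFinset.card ∧
    (∑ v, (G.degree v) ^ 2) = (∑ w, (H.degree w) ^ 2) ∧
    ((∑ v, (G.degree v : ℤ) ^ 3) + 6 * (triangleCount G : ℤ)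
      = (∑ w, (H.degree w : ℤ) ^ 3) + 6 * (triangleCount H : ℤ)) := by
  have hcard : Fintype.card V = Fintype.card W := by
    rw [← Matrix.natDegree_permCharpoly (signlessLapMatrix G),
      ← Matrix.natDegree_permCharpoly (signlessLapMatrix H), ← G.qPermPoly_eq_permCharpoly,
      ← H.qPermPoly_eq_permCharpoly, h]
  have hcoeff (k : ℕ) : ((qPermPoly G).reflect (Fintype.card V)).coeff k
      = ((qPermPoly H).reflect (Fintype.card W)).coeff k := by
    rw [h, hcard]
  have hd1 : ∑ v, (G.degree v : ℚ) = ∑ w, (H.degree w : ℚ) := by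
    have h1 := hcoeff 1
    rwa [G.coeff_reflect_qPermPoly_one, H.coeff_reflect_qPermPoly_one, neg_inj] at h1
  have hd2 : ∑ v, (G.degree v : ℚ) ^ 2 = ∑ w, (H.degree w : ℚ) ^ 2 := by
    have h2 := congrArg (2 * ·) (hcoeff 2)
    simp only [G.two_mul_coeff_reflect_qPermPoly_two, H.two_mul_coeff_reflect_qPermPoly_two, hd1] at h2
    linarith
  have hd3 : ∑ v, (G.degree v : ℚ) ^ 3 + 6 * triangleCount G
      = ∑ w, (H.degree w : ℚ) ^ 3 + 6 * triangleCount H := by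
    have h3 := congrArg (6 * ·) (hcoeff 3)
    simp only [G.six_mul_coeff_reflect_qPermPoly_three, H.six_mul_coeff_reflect_qPermPoly_three,
      hd1, hd2] at h3
    linarith
  refine ⟨hcard, ?_, by exact_mod_cast hd2, by exact_mod_cast hd3⟩
  have hdeg : ∑ v, G.degree v = ∑ w, H.degree w := by exact_mod_cast hd1
  have hG := G.sum_degrees_eq_twice_card_edges
  have hH := H.sum_degrees_eq_twice_card_edges
  omega
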